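/- Consider two ReLU networks with the same architecture: $h^{[j]} = \sigma(A_j^\top h^{[j-1]} + \mathbf{b}_j)$ and $\tilde{h}^{[j]} = \sigma(\tilde{A}_j^\top \tilde{h}^{[j-1]} + \tilde{\mathbf{b}}_j)$, both with $h^{[0]} = \tilde{h}^{[0]} = x \in [0,1]^d$, where all parameters satisfy $\max_i\|A_{j,:,i}\|_1 \le D$, $\|\mathbf{b}_j\|_\infty \le D$ (and similarly for the tilde parameters), with $D \ge 2$. Then $\|h^{[J]} - \tilde{h}^{[J]}\|_\infty \le J D^{J-1}\max_j\bigl(3\|A_j - \tilde{A}_j\|_1 + \|\mathbf{b}_j - \tilde{\mathbf{b}}_j\|_\infty\bigr)$, where $\|A\|_1 := \max_i \|A_{:,i}\|_1$. -/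
import Mathlib

lemma relu_aux_bound (W : ℕ → ℕ)
    (A : (j : ℕ) → Fin (W (j + 1)) → Fin (W j) → ℝ)
    (b : (j : ℕ) → Fin (W (j + 1)) → ℝ)
    (D : ℝ) (hD : 2 ≤ D)
    (hA : ∀ j, ∀ i : Fin (W (j + 1)), ∑ k, |A j i k| ≤ D)
    (hb : ∀ j, ∀ i : Fin (W (j + 1)), |b j i| ≤ D)
    (h : (j : ℕ) → Fin (W j) → ℝ)
    (hx0 : ∀ i : Fin (W 0), h 0 i ∈ Set.Icc (0 : ℝ) 1)
    (hrec : ∀ j, ∀ i : Fin (W (j + 1)),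
      h (j + 1) i = max (∑ k, A j i k * h j k + b j i) 0) :
    ∀ j, ∀ i : Fin (W j), |h j i| ≤ 3 * D ^ j - 2 := by
  intro j
  induction j with
  | zero =>
    intro i
    obtain ⟨h0, h1⟩ := hx0 i
    rw [abs_le]; constructor <;> simp <;> linarith
  | succ j ih =>
    intro i
    have hpow : (1 : ℝ) ≤ D ^ j := one_le_pow₀ (by linarith)
    have hB : (0 : ℝ) ≤ 3 * D ^ j - 2 := by linarith
    have hS : |∑ k, A j i k * h j k + b j i| ≤ D * (3 * D ^ j - 2) + D := by
      refine (abs_add_le _ _).trans (add_le_add ?_ (hb j i))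
      refine (Finset.abs_sum_le_sum_abs _ _).trans ?_
      calc ∑ k, |A j i k * h j k| ≤ ∑ k, |A j i k| * (3 * D ^ j - 2) := by
            refine Finset.sum_le_sum fun k _ => ?_
            rw [abs_mul]
            exact mul_le_mul_of_nonneg_left (ih k) (abs_nonneg _)
        _ = (∑ k, |A j i k|) * (3 * D ^ j - 2) := by rw [Finset.sum_mul]
        _ ≤ D * (3 * D ^ j - 2) := mul_le_mul_of_nonneg_right (hA j i) hB
    have : |h (j + 1) i| ≤ |∑ k, A j i k * h j k + b j i| := by
      rw [hrec j i, abs_le]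
      constructor
      · exact le_trans (neg_nonpos.mpr (abs_nonneg _)) (le_max_right _ _)
      · exact max_le (le_abs_self _) (abs_nonneg _)
    refine this.trans (hS.trans ?_)
    have : D * (3 * D ^ j - 2) + D = 3 * D ^ (j + 1) - D := by ring
    rw [this]
    linarith

/-- Parameter-perturbation Lipschitz estimate for multi-layer ReLU networks: two
networks with the same architecture, both with parameters bounded by `D ≥ 2` and
the same input in `[0,1]^d`, satisfy
`‖h⁽ᴶ⁾ - h̃⁽ᴶ⁾‖_∞ ≤ J D^{J-1} max_j (3‖Aⱼ - Ãⱼ‖₁ + ‖bⱼ - b̃ⱼ‖_∞)`,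
where `‖A‖₁` is the maximum column ℓ¹ norm. -/
theorem relu_network_parameter_perturbation
    (W : ℕ → ℕ) (hW : ∀ j, 0 < W j)
    (A A' : (j : ℕ) → Fin (W (j + 1)) → Fin (W j) → ℝ)
    (b b' : (j : ℕ) → Fin (W (j + 1)) → ℝ)
    (D : ℝ) (hD : 2 ≤ D)
    (hA : ∀ j, ∀ i : Fin (W (j + 1)), ∑ k, |A j i k| ≤ D)
    (hA' : ∀ j, ∀ i : Fin (W (j + 1)), ∑ k, |A' j i k| ≤ D)
    (hb : ∀ j, ∀ i : Fin (W (j + 1)), |b j i| ≤ D)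
    (hb' : ∀ j, ∀ i : Fin (W (j + 1)), |b' j i| ≤ D)
    (h h' : (j : ℕ) → Fin (W j) → ℝ)
    (hx0 : ∀ i : Fin (W 0), h 0 i ∈ Set.Icc (0 : ℝ) 1)
    (hsame : h 0 = h' 0)
    (hrec : ∀ j, ∀ i : Fin (W (j + 1)),
      h (j + 1) i = max (∑ k, A j i k * h j k + b j i) 0)
    (hrec' : ∀ j, ∀ i : Fin (W (j + 1)),
      h' (j + 1) i = max (∑ k, A' j i k * h' j k + b' j i) 0)
    (J : ℕ) (hJ : 0 < J) :
    ∀ i : Fin (W J), |h J i - h' J i| ≤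
      (J : ℝ) * D ^ (J - 1) *
        ⨆ j : Fin J, (3 * (⨆ i' : Fin (W ((j : ℕ) + 1)), ∑ k, |A j i' k - A' j i' k|)
          + ⨆ i' : Fin (W ((j : ℕ) + 1)), |b j i' - b' j i'|) := by
  set sA : ℕ → ℝ := fun j => ⨆ i' : Fin (W (j + 1)), ∑ k, |A j i' k - A' j i' k| with hsAdef
  set sb : ℕ → ℝ := fun j => ⨆ i' : Fin (W (j + 1)), |b j i' - b' j i'| with hsbdef
  set M : ℝ := ⨆ j : Fin J, (3 * sA (j : ℕ) + sb (j : ℕ)) with hMdef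
  have hsA : ∀ j, ∀ i : Fin (W (j + 1)), ∑ k, |A j i k - A' j i k| ≤ sA j := by
    intro j i
    simpa using le_ciSup (f := fun i' : Fin (W (j + 1)) => ∑ k, |A j i' k - A' j i' k|)
      (Set.Finite.bddAbove (Set.finite_range _)) i
  have hsb : ∀ j, ∀ i : Fin (W (j + 1)), |b j i - b' j i| ≤ sb j := by
    intro j i
    simpa using le_ciSup (f := fun i' : Fin (W (j + 1)) => |b j i' - b' j i'|)
      (Set.Finite.bddAbove (Set.finite_range _)) i
  have hsA0 : ∀ j, 0 ≤ sA j := fun j =>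
    Real.iSup_nonneg fun i => Finset.sum_nonneg fun k _ => abs_nonneg _
  have hsb0 : ∀ j, 0 ≤ sb j := fun j => Real.iSup_nonneg fun i => abs_nonneg _
  have hM : ∀ j, j < J → 3 * sA j + sb j ≤ M := by
    intro j hj
    simpa using le_ciSup (f := fun j' : Fin J => 3 * sA (j' : ℕ) + sb (j' : ℕ))
      (Set.Finite.bddAbove (Set.finite_range _)) (⟨j, hj⟩ : Fin J)
  have hM0 : 0 ≤ M := le_trans (by have := hsA0 0; have := hsb0 0; linarith) (hM 0 hJ)
  have hbnd := relu_aux_bound W A b D hD hA hb h hx0 hrec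
  -- single layer estimate
  have key : ∀ j, ∀ E : ℝ, 0 ≤ E → (∀ k : Fin (W j), |h j k - h' j k| ≤ E) →
      ∀ i : Fin (W (j + 1)),
        |h (j + 1) i - h' (j + 1) i| ≤ 3 * D ^ j * sA j + D * E + sb j := by
    intro j E hE hEk i
    have hpow : (1 : ℝ) ≤ D ^ j := one_le_pow₀ (by linarith)
    rw [hrec j i, hrec' j i]
    refine (abs_max_sub_max_le_abs _ _ _).trans ?_
    have heq : (∑ k, A j i k * h j k + b j i) - (∑ k, A' j i k * h' j k + b' j i)
        = (∑ k, (A j i k * h j k - A' j i k * h' j k)) + (b j i - b' j i) := by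
      rw [Finset.sum_sub_distrib]; ring
    rw [heq]
    refine (abs_add_le _ _).trans ?_
    have h1 : |∑ k, (A j i k * h j k - A' j i k * h' j k)| ≤ 3 * D ^ j * sA j + D * E := by
      refine (Finset.abs_sum_le_sum_abs _ _).trans ?_
      calc ∑ k, |A j i k * h j k - A' j i k * h' j k|
          ≤ ∑ k, (|A j i k - A' j i k| * (3 * D ^ j) + |A' j i k| * E) := by
            refine Finset.sum_le_sum fun k _ => ?_
            have : A j i k * h j k - A' j i k * h' j k
                = (A j i k - A' j i k) * h j k + A' j i k * (h j k - h' j k) := by ring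
            rw [this]
            refine (abs_add_le _ _).trans ?_
            rw [abs_mul, abs_mul]
            refine add_le_add ?_ ?_
            · exact mul_le_mul_of_nonneg_left ((hbnd j k).trans (by linarith)) (abs_nonneg _)
            · exact mul_le_mul_of_nonneg_left (hEk k) (abs_nonneg _)
        _ = (∑ k, |A j i k - A' j i k|) * (3 * D ^ j) + (∑ k, |A' j i k|) * E := by
            rw [Finset.sum_add_distrib, Finset.sum_mul, Finset.sum_mul]
        _ ≤ sA j * (3 * D ^ j) + D * E := by
            refine add_le_add ?_ (mul_le_mul_of_nonneg_right (hA' j i) hE)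
            exact mul_le_mul_of_nonneg_right (hsA j i) (by positivity)
        _ = 3 * D ^ j * sA j + D * E := by ring
    linarith [hsb j i]
  -- main induction
  have main : ∀ j, j < J → ∀ i : Fin (W (j + 1)),
      |h (j + 1) i - h' (j + 1) i| ≤ ((j : ℝ) + 1) * D ^ j * M := by
    intro j
    induction j with
    | zero =>
      intro _ i
      have h0 : ∀ k : Fin (W 0), |h 0 k - h' 0 k| ≤ 0 := by
        intro k; rw [hsame]; simp
      have := key 0 0 le_rfl h0 i
      have hM1 := hM 0 hJ
      simp only [pow_zero] at this ⊢
      push_cast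
      linarith
    | succ j ih =>
      intro hj i
      have hj' : j < J := Nat.lt_of_succ_lt hj
      have hE := ih hj'
      have := key (j + 1) (((j : ℝ) + 1) * D ^ j * M)
        (by positivity) hE i
      refine this.trans ?_
      have hM1 := hM (j + 1) hj
      have hpow : (1 : ℝ) ≤ D ^ (j + 1) := one_le_pow₀ (by linarith)
      have hDpow : D * (((j : ℝ) + 1) * D ^ j * M) = ((j : ℝ) + 1) * D ^ (j + 1) * M := by
        ring
      rw [hDpow]
      have hsA0' := hsA0 (j + 1)
      have hsb0' := hsb0 (j + 1)
      push_cast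
      nlinarith [mul_le_mul_of_nonneg_left hM1 (le_trans zero_le_one hpow)]
  intro i
  obtain ⟨J', rfl⟩ : ∃ J', J = J' + 1 := ⟨J - 1, (Nat.succ_pred_eq_of_pos hJ).symm⟩
  have := main J' (Nat.lt_succ_self J') i
  simpa using this
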